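/- Let D_T be a probability measure on X, let H be a set of measurable classifiers with prior probability measure π on H, let c > 0 and δ ∈ (0,1]. Then with probability at least 1 − δ over the draw of an i.i.d. sample T = (x'_1,…,x'_{m_t}) ∼ (D_T)^{m_t}, simultaneously for all posteriors Q on H: d_{D_T}(Q) ≤ (c/(1−e^{−c})) · [ d̂_T(Q) + (2·KL(Q‖π) + ln(1/δ)) / (m_t·c) ], where d̂_T(Q) = (1/m_t) Σ_{i=1}^{m_t} E_{h∼Q} E_{h'∼Q} 1[h(x'_i) ≠ h'(x'_i)] is the empirical expected disagreement. -/

import Mathlib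

/-!
The disagreement of `Q` is the risk of the posterior `Q ⊗ Q` on pairs of classifiers for the loss
`1[h x ≠ h' x]`, and `KL(Q ⊗ Q ‖ π ⊗ π) = 2 KL(Q ‖ π)`, so the theorem is Catoni's PAC-Bayes bound
for a `[0, 1]`-valued loss `ℓ`. By convexity of `exp`,
`E exp (-c ℓ) ≤ 1 - (1 - e^{-c}) E ℓ ≤ exp (-(1 - e^{-c}) E ℓ)`, so for each fixed `θ` the
statistic `m (1 - e^{-c}) R(θ) - c Σᵢ ℓ(θ, xᵢ)` has exponential moment at most `1` under the
i.i.d. sample. By Fubini the same holds after averaging over the prior, and Markov's inequality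
makes that prior average exceed `1/δ` with probability at most `δ`. Outside this event the
Donsker–Varadhan change of measure `E_ρ f ≤ KL(ρ ‖ π) + log E_π exp f` bounds the averaged
statistic for all posteriors `ρ` at once.
-/

open MeasureTheory ProbabilityTheory Real
open scoped ENNReal Classical

noncomputable section

/-- Kullback–Leibler divergence, `∞` in the degenerate cases. -/
def klDivergence {Ω : Type*} [MeasurableSpace Ω] (Q pr : Measure Ω) : ℝ≥0∞ :=
  if Q ≪ pr ∧ Integrable (llr Q pr) Q then ENNReal.ofReal (∫ h, llr Q pr h ∂Q) else ∞

open InformationTheory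

lemma exp_neg_mul_le_one_sub_mul (c : ℝ) {y : ℝ} (hy0 : 0 ≤ y) (hy1 : y ≤ 1) :
    exp (-(c * y)) ≤ 1 - (1 - exp (-c)) * y := by
  have hconv := convexOn_exp.2 (Set.mem_univ 0) (Set.mem_univ (-c)) (sub_nonneg.2 hy1) hy0
    (sub_add_cancel 1 y)
  simp only [smul_eq_mul, mul_zero, zero_add, exp_zero, mul_one] at hconv
  calc exp (-(c * y)) = exp (y * -c) := by ring_nf
    _ ≤ 1 - y + y * exp (-c) := hconv
    _ = 1 - (1 - exp (-c)) * y := by ring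

lemma integrable_of_nonneg_of_le_one {α : Type*} [MeasurableSpace α] {μ : Measure α}
    [IsFiniteMeasure μ] {f : α → ℝ} (hf : Measurable f) (h0 : ∀ x, 0 ≤ f x) (h1 : ∀ x, f x ≤ 1) :
    Integrable f μ :=
  .of_bound hf.aestronglyMeasurable 1 (ae_of_all _ fun x ↦ abs_le.2 ⟨by linarith [h0 x], h1 x⟩)

lemma integral_le_one_of_le_one {α : Type*} [MeasurableSpace α] {μ : Measure α}
    [IsProbabilityMeasure μ] {f : α → ℝ} (h0 : ∀ x, 0 ≤ f x) (h1 : ∀ x, f x ≤ 1) :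
    ∫ x, f x ∂μ ≤ 1 :=
  (integral_mono_of_nonneg (ae_of_all _ h0) (integrable_const 1) (ae_of_all _ h1)).trans_eq
    (by simp)

section KL

variable {α β : Type*} [MeasurableSpace α] [MeasurableSpace β]

lemma klDivergence_eq_klDiv (μ ν : Measure α) [IsProbabilityMeasure μ]
    [IsProbabilityMeasure ν] :
    klDivergence μ ν = klDiv μ ν := by
  by_cases h : μ ≪ ν ∧ Integrable (llr μ ν) μ
  · rw [klDivergence, if_pos h, klDiv_of_ac_of_integrable h.1 h.2]
    simp
  · rw [klDivergence, if_neg h, eq_comm, klDiv_eq_top_iff]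
    exact fun hac hint => h ⟨hac, hint⟩

lemma klDiv_prod_left (μ : Measure α) (ν ν' : Measure β) [IsProbabilityMeasure μ]
    [IsProbabilityMeasure ν] [IsProbabilityMeasure ν'] :
    klDiv (μ.prod ν) (μ.prod ν') = klDiv ν ν' := by
  have hright := klDiv_compProd_left ν ν' (Kernel.const β μ)
  rw [Measure.compProd_const, Measure.compProd_const] at hright
  refine le_antisymm ?_ ?_
  · simpa only [Measure.prod_swap, hright] using
      klDiv_map_le (ν.prod μ) (ν'.prod μ) measurable_swap
  · simpa only [Measure.prod_swap, hright] using
      klDiv_map_le (μ.prod ν) (μ.prod ν') measurable_swap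

lemma klDiv_prod (μ μ' : Measure α) (ν ν' : Measure β) [IsProbabilityMeasure μ]
    [IsProbabilityMeasure μ'] [IsProbabilityMeasure ν] [IsProbabilityMeasure ν'] :
    klDiv (μ.prod ν) (μ'.prod ν') = klDiv μ μ' + klDiv ν ν' := by
  rw [← Measure.compProd_const, ← Measure.compProd_const, klDiv_compProd_eq_add,
    Measure.compProd_const, Measure.compProd_const, klDiv_prod_left]

lemma integral_le_toReal_klDiv_add_log_integral_exp {μ ν : Measure α} [IsProbabilityMeasure μ]
    [IsProbabilityMeasure ν] (hμν : klDiv μ ν ≠ ∞) {f : α → ℝ} (hfμ : Integrable f μ)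
    (hfν : Integrable (fun x ↦ exp (f x)) ν) :
    ∫ x, f x ∂μ ≤ (klDiv μ ν).toReal + log (∫ x, exp (f x) ∂ν) := by
  obtain ⟨hac, hint⟩ := klDiv_ne_top_iff.1 hμν
  have : IsProbabilityMeasure (ν.tilted f) := isProbabilityMeasure_tilted hfν
  have hac' : μ ≪ ν.tilted f := hac.trans (absolutelyContinuous_tilted hfν)
  have gibbs := integral_llr_add_sub_measure_univ_nonneg hac'
    (integrable_llr_tilted_right hac hfμ hint hfν)
  rw [integral_llr_tilted_right hac hfμ hfν hint] at gibbs
  rw [toReal_klDiv_of_measure_eq hac (by simp)]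
  simp only [probReal_univ] at gibbs
  linarith

end KL

section Catoni

variable {X Θ : Type*} [MeasurableSpace X] [MeasurableSpace Θ]

lemma integral_exp_neg_mul_le (D : Measure X) [IsProbabilityMeasure D] {g : X → ℝ}
    (hg : Measurable g) (hg0 : ∀ x, 0 ≤ g x) (hg1 : ∀ x, g x ≤ 1) (c : ℝ) :
    ∫ x, exp (-(c * g x)) ∂D ≤ exp (-((1 - exp (-c)) * ∫ x, g x ∂D)) := by
  have hgi : Integrable g D := integrable_of_nonneg_of_le_one hg hg0 hg1
  calc ∫ x, exp (-(c * g x)) ∂D ≤ ∫ x, 1 - (1 - exp (-c)) * g x ∂D :=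
        integral_mono_of_nonneg (ae_of_all _ fun _ ↦ (exp_pos _).le)
          ((integrable_const 1).sub (hgi.const_mul _))
          (ae_of_all _ fun x ↦ exp_neg_mul_le_one_sub_mul c (hg0 x) (hg1 x))
    _ = 1 - (1 - exp (-c)) * ∫ x, g x ∂D := by
        rw [integral_sub (integrable_const 1) (hgi.const_mul _), integral_const_mul]
        simp
    _ ≤ exp (-((1 - exp (-c)) * ∫ x, g x ∂D)) := by
        linarith [add_one_le_exp (-((1 - exp (-c)) * ∫ x, g x ∂D))]

def catoniStat (ℓ : Θ → X → ℝ) (D : Measure X) (c : ℝ) {m : ℕ} (T : Fin m → X) (θ : Θ) : ℝ :=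
  m * (1 - exp (-c)) * ∫ x, ℓ θ x ∂D - c * ∑ i, ℓ θ (T i)

variable {ℓ : Θ → X → ℝ} {D : Measure X} [IsProbabilityMeasure D] {c : ℝ} {m : ℕ}

lemma integral_exp_catoniStat_le_one (hℓ : Measurable (Function.uncurry ℓ))
    (hℓ0 : ∀ θ x, 0 ≤ ℓ θ x) (hℓ1 : ∀ θ x, ℓ θ x ≤ 1) (θ : Θ) :
    ∫ T, exp (catoniStat ℓ D c T θ) ∂(Measure.pi fun _ : Fin m ↦ D) ≤ 1 := by
  have hfactor : ∀ T : Fin m → X, exp (catoniStat ℓ D c T θ)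
      = exp (m * (1 - exp (-c)) * ∫ x, ℓ θ x ∂D) * ∏ i, exp (-(c * ℓ θ (T i))) := fun T ↦ by
    rw [← exp_sum, ← exp_add, catoniStat, Finset.sum_neg_distrib, ← Finset.mul_sum]
    ring_nf
  have hcoord := integral_exp_neg_mul_le D (hℓ.comp measurable_prodMk_left) (hℓ0 θ) (hℓ1 θ) c
  simp only [Function.comp_def, Function.uncurry_apply_pair] at hcoord
  rw [integral_congr_ae (ae_of_all _ hfactor), integral_const_mul,
    integral_fintype_prod_eq_pow (fun x ↦ exp (-(c * ℓ θ x))), Fintype.card_fin]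
  calc exp (m * (1 - exp (-c)) * ∫ x, ℓ θ x ∂D) * (∫ x, exp (-(c * ℓ θ x)) ∂D) ^ m
      ≤ exp (m * (1 - exp (-c)) * ∫ x, ℓ θ x ∂D)
          * exp (-((1 - exp (-c)) * ∫ x, ℓ θ x ∂D)) ^ m :=
        mul_le_mul_of_nonneg_left
          (pow_le_pow_left₀ (integral_nonneg fun _ ↦ (exp_pos _).le) hcoord m) (exp_pos _).le
    _ = 1 := by rw [← exp_nat_mul, ← exp_add]; ring_nf; exact exp_zero

omit [MeasurableSpace Θ] in
lemma abs_catoniStat_le (hℓ0 : ∀ θ x, 0 ≤ ℓ θ x) (hℓ1 : ∀ θ x, ℓ θ x ≤ 1) (hc : 0 ≤ c)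
    (T : Fin m → X) (θ : Θ) :
    |catoniStat ℓ D c T θ| ≤ m * (1 + c) := by
  have hL0 : 0 ≤ ∫ x, ℓ θ x ∂D := integral_nonneg (hℓ0 θ)
  have hL1 : ∫ x, ℓ θ x ∂D ≤ 1 := integral_le_one_of_le_one (hℓ0 θ) (hℓ1 θ)
  have hS0 : 0 ≤ ∑ i, ℓ θ (T i) := Finset.sum_nonneg fun i _ ↦ hℓ0 θ (T i)
  have hS1 : ∑ i, ℓ θ (T i) ≤ m := by
    simpa using Finset.sum_le_sum fun i (_ : i ∈ Finset.univ) ↦ hℓ1 θ (T i)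
  have ht0 : 0 ≤ 1 - exp (-c) := by linarith [exp_le_one_iff.2 (neg_nonpos.2 hc)]
  have ht1 : 1 - exp (-c) ≤ 1 := by linarith [exp_pos (-c)]
  have hm : (0 : ℝ) ≤ m := m.cast_nonneg
  rw [catoniStat, abs_le]
  constructor <;> nlinarith [mul_le_mul hL1 ht1 ht0 zero_le_one, mul_nonneg ht0 hL0,
    mul_le_mul_of_nonneg_left hS1 hc, mul_nonneg hc hS0]

omit [MeasurableSpace Θ] in
lemma norm_exp_catoniStat_le (hℓ0 : ∀ θ x, 0 ≤ ℓ θ x) (hℓ1 : ∀ θ x, ℓ θ x ≤ 1) (hc : 0 ≤ c)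
    (T : Fin m → X) (θ : Θ) :
    ‖exp (catoniStat ℓ D c T θ)‖ ≤ exp (m * (1 + c)) := by
  rw [Real.norm_of_nonneg (exp_pos _).le]
  exact exp_le_exp.2 ((le_abs_self _).trans (abs_catoniStat_le hℓ0 hℓ1 hc T θ))

lemma measurable_catoniStat (hℓ : Measurable (Function.uncurry ℓ)) :
    Measurable (Function.uncurry (catoniStat ℓ D c : (Fin m → X) → Θ → ℝ)) := by
  have hrisk : Measurable fun θ ↦ ∫ x, ℓ θ x ∂D :=
    hℓ.stronglyMeasurable.integral_prod_right'.measurable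
  have hemp : Measurable fun q : (Fin m → X) × Θ ↦ ∑ i, ℓ q.2 (q.1 i) :=
    Finset.measurable_sum _ fun i _ ↦
      hℓ.comp (measurable_snd.prodMk ((measurable_pi_apply i).comp measurable_fst))
  exact ((hrisk.comp measurable_snd).const_mul _).sub (hemp.const_mul c)

lemma integral_catoniStat (hℓ : Measurable (Function.uncurry ℓ))
    (hℓ0 : ∀ θ x, 0 ≤ ℓ θ x) (hℓ1 : ∀ θ x, ℓ θ x ≤ 1) (ρ : Measure Θ) [IsProbabilityMeasure ρ]
    (T : Fin m → X) :
    ∫ θ, catoniStat ℓ D c T θ ∂ρ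
      = m * (1 - exp (-c)) * ∫ θ, ∫ x, ℓ θ x ∂D ∂ρ - c * ∑ i, ∫ θ, ℓ θ (T i) ∂ρ := by
  have hrisk : Integrable (fun θ ↦ ∫ x, ℓ θ x ∂D) ρ :=
    integrable_of_nonneg_of_le_one hℓ.stronglyMeasurable.integral_prod_right'.measurable
      (fun θ ↦ integral_nonneg (hℓ0 θ)) fun θ ↦ integral_le_one_of_le_one (hℓ0 θ) (hℓ1 θ)
  have hemp (i : Fin m) : Integrable (fun θ ↦ ℓ θ (T i)) ρ :=
    integrable_of_nonneg_of_le_one (hℓ.comp measurable_prodMk_right) (fun θ ↦ hℓ0 θ (T i))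
      fun θ ↦ hℓ1 θ (T i)
  simp only [catoniStat]
  rw [integral_sub (hrisk.const_mul _) ((integrable_finsetSum _ fun i _ ↦ hemp i).const_mul c),
    integral_const_mul, integral_const_mul, integral_finsetSum _ fun i _ ↦ hemp i]

lemma measure_le_integral_exp_catoniStat_le (hℓ : Measurable (Function.uncurry ℓ))
    (hℓ0 : ∀ θ x, 0 ≤ ℓ θ x) (hℓ1 : ∀ θ x, ℓ θ x ≤ 1) (P : Measure Θ) [IsProbabilityMeasure P]
    (hc : 0 ≤ c) {δ : ℝ} (hδ : 0 < δ) :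
    (Measure.pi fun _ : Fin m ↦ D) {T | 1 / δ ≤ ∫ θ, exp (catoniStat ℓ D c T θ) ∂P}
      ≤ ENNReal.ofReal δ := by
  set μ := Measure.pi fun _ : Fin m ↦ D
  have hint : Integrable (fun q : (Fin m → X) × Θ ↦ exp (catoniStat ℓ D c q.1 q.2)) (μ.prod P) :=
    .of_bound (measurable_catoniStat hℓ).exp.aestronglyMeasurable _
      (ae_of_all _ fun q ↦ norm_exp_catoniStat_le hℓ0 hℓ1 hc q.1 q.2)
  have hmean : ∫ T, ∫ θ, exp (catoniStat ℓ D c T θ) ∂P ∂μ ≤ 1 := by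
    rw [integral_integral_swap hint]
    calc ∫ θ, ∫ T, exp (catoniStat ℓ D c T θ) ∂μ ∂P ≤ ∫ _θ, (1 : ℝ) ∂P :=
          integral_mono hint.integral_prod_right (integrable_const 1)
            (integral_exp_catoniStat_le_one hℓ hℓ0 hℓ1)
      _ = 1 := by simp
  have hmarkov := mul_meas_ge_le_integral_of_nonneg
    (ae_of_all _ fun T ↦ integral_nonneg fun θ ↦ (exp_pos (catoniStat ℓ D c T θ)).le)
    hint.integral_prod_left (1 / δ)
  rw [one_div, inv_mul_le_iff₀ hδ] at hmarkov
  rw [ENNReal.le_ofReal_iff_toReal_le (measure_ne_top _ _) hδ.le, ← measureReal_def, one_div]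
  exact hmarkov.trans (mul_le_of_le_one_right hδ.le hmean)

theorem pac_bayes_catoni (hℓ : Measurable (Function.uncurry ℓ)) (hℓ0 : ∀ θ x, 0 ≤ ℓ θ x)
    (hℓ1 : ∀ θ x, ℓ θ x ≤ 1) (P : Measure Θ) [IsProbabilityMeasure P] (hc : 0 ≤ c) {δ : ℝ}
    (hδ : 0 < δ) :
    ENNReal.ofReal (1 - δ) ≤ (Measure.pi fun _ : Fin m ↦ D)
      {T | ∀ ρ : Measure Θ, IsProbabilityMeasure ρ → klDiv ρ P ≠ ∞ →
        m * (1 - exp (-c)) * ∫ θ, ∫ x, ℓ θ x ∂D ∂ρ - c * ∑ i, ∫ θ, ℓ θ (T i) ∂ρ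
          ≤ (klDiv ρ P).toReal + log (1 / δ)} := by
  set μ := Measure.pi fun _ : Fin m ↦ D
  set F : (Fin m → X) → ℝ := fun T ↦ ∫ θ, exp (catoniStat ℓ D c T θ) ∂P
  have hFmeas : Measurable F :=
    (measurable_catoniStat hℓ).exp.stronglyMeasurable.integral_prod_right'.measurable
  have hgood : {T | 1 / δ ≤ F T}ᶜ ⊆
      {T | ∀ ρ : Measure Θ, IsProbabilityMeasure ρ → klDiv ρ P ≠ ∞ →
        m * (1 - exp (-c)) * ∫ θ, ∫ x, ℓ θ x ∂D ∂ρ - c * ∑ i, ∫ θ, ℓ θ (T i) ∂ρ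
          ≤ (klDiv ρ P).toReal + log (1 / δ)} := by
    intro T (hT : ¬ 1 / δ ≤ F T) ρ _ hρ
    have hmeas : Measurable (catoniStat ℓ D c T) :=
      (measurable_catoniStat hℓ).comp measurable_prodMk_left
    have hexp_int : Integrable (fun θ ↦ exp (catoniStat ℓ D c T θ)) P :=
      .of_bound hmeas.exp.aestronglyMeasurable _ (ae_of_all _ (norm_exp_catoniStat_le hℓ0 hℓ1 hc T))
    have hint : Integrable (catoniStat ℓ D c T) ρ :=
      .of_bound hmeas.aestronglyMeasurable _ (ae_of_all _ (abs_catoniStat_le hℓ0 hℓ1 hc T))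
    rw [← integral_catoniStat hℓ hℓ0 hℓ1]
    calc ∫ θ, catoniStat ℓ D c T θ ∂ρ ≤ (klDiv ρ P).toReal + log (F T) :=
          integral_le_toReal_klDiv_add_log_integral_exp hρ hint hexp_int
      _ ≤ (klDiv ρ P).toReal + log (1 / δ) := by
          gcongr
          · exact integral_exp_pos hexp_int
          · exact (not_le.1 hT).le
  calc ENNReal.ofReal (1 - δ) ≤ 1 - ENNReal.ofReal δ := by
        rw [ENNReal.ofReal_sub _ hδ.le, ENNReal.ofReal_one]
    _ ≤ 1 - μ {T | 1 / δ ≤ F T} :=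
        tsub_le_tsub_left (measure_le_integral_exp_catoniStat_le hℓ hℓ0 hℓ1 P hc hδ) 1
    _ = μ {T | 1 / δ ≤ F T}ᶜ :=
        (prob_compl_eq_one_sub (measurableSet_le measurable_const hFmeas)).symm
    _ ≤ _ := measure_mono hgood

end Catoni

lemma ofReal_le_of_mul_sub_mul_le {m : ℕ} {c t d s L : ℝ} {K : ℝ≥0∞} (hc : 0 < c) (ht : 0 < t)
    (hL : 0 < L) (h : K ≠ ∞ → m * t * d - c * s ≤ K.toReal + L) :
    ENNReal.ofReal d ≤ ENNReal.ofReal (c / t)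
      * (ENNReal.ofReal (1 / m * s) + (K + ENNReal.ofReal L) / ENNReal.ofReal (m * c)) := by
  have hct : ENNReal.ofReal (c / t) ≠ 0 := (ENNReal.ofReal_pos.2 (div_pos hc ht)).ne'
  rcases eq_or_ne K ∞ with rfl | hK
  · rw [top_add, ENNReal.top_div_of_ne_top ENNReal.ofReal_ne_top, add_top, ENNReal.mul_top hct]
    exact le_top
  rcases Nat.eq_zero_or_pos m with rfl | hm
  -- for `m = 0` the right side is `∞`, because `x / 0 = ∞` in `ℝ≥0∞` when `x ≠ 0`
  · have hnum : K + ENNReal.ofReal L ≠ 0 :=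
      fun h0 ↦ (ENNReal.ofReal_pos.2 hL).ne' (add_eq_zero.1 h0).2
    rw [Nat.cast_zero, zero_mul, ENNReal.ofReal_zero, ENNReal.div_zero hnum, add_top,
      ENNReal.mul_top hct]
    exact le_top
  have hm' : (0 : ℝ) < m := Nat.cast_pos.2 hm
  have hreal : d ≤ c / t * (1 / m * s + (K.toReal + L) / (m * c)) := by
    rw [show c / t * (1 / m * s + (K.toReal + L) / (m * c))
        = (c * s + (K.toReal + L)) / (m * t) by field_simp, le_div_iff₀ (by positivity)]
    linarith [h hK]
  calc ENNReal.ofReal d ≤ ENNReal.ofReal (c / t * (1 / m * s + (K.toReal + L) / (m * c))) :=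
        ENNReal.ofReal_le_ofReal hreal
    _ ≤ ENNReal.ofReal (c / t)
        * (ENNReal.ofReal (1 / m * s) + ENNReal.ofReal ((K.toReal + L) / (m * c))) := by
        rw [ENNReal.ofReal_mul (div_pos hc ht).le]
        gcongr
        exact ENNReal.ofReal_add_le
    _ = _ := by
        rw [ENNReal.ofReal_div_of_pos (y := m * c) (by positivity),
          ENNReal.ofReal_add ENNReal.toReal_nonneg hL.le, ENNReal.ofReal_toReal hK]

section Disagreement

variable {X Ω : Type*}

def disagreement (ev : Ω → X → Bool) (θ : Ω × Ω) (x : X) : ℝ :=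
  if ev θ.1 x ≠ ev θ.2 x then 1 else 0

lemma disagreement_nonneg (ev : Ω → X → Bool) (θ : Ω × Ω) (x : X) :
    0 ≤ disagreement ev θ x := by
  unfold disagreement; split_ifs <;> norm_num

lemma disagreement_le_one (ev : Ω → X → Bool) (θ : Ω × Ω) (x : X) : disagreement ev θ x ≤ 1 := by
  unfold disagreement; split_ifs <;> norm_num

variable [MeasurableSpace X] [MeasurableSpace Ω]

lemma measurable_disagreement {ev : Ω → X → Bool} (hev : Measurable (Function.uncurry ev)) :
    Measurable (Function.uncurry (disagreement ev)) := by
  have hfst : Measurable fun q : (Ω × Ω) × X ↦ ev q.1.1 q.2 :=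
    hev.comp (measurable_fst.fst.prodMk measurable_snd)
  have hsnd : Measurable fun q : (Ω × Ω) × X ↦ ev q.1.2 q.2 :=
    hev.comp (measurable_fst.snd.prodMk measurable_snd)
  exact Measurable.ite ((measurableSet_eq_fun hfst hsnd).compl) measurable_const measurable_const

lemma integral_prod_disagreement {ev : Ω → X → Bool} (hev : Measurable (Function.uncurry ev))
    (Q : Measure Ω) [IsProbabilityMeasure Q] (x : X) :
    ∫ θ, disagreement ev θ x ∂(Q.prod Q)
      = ∫ h, ∫ h', (if ev h x ≠ ev h' x then (1 : ℝ) else 0) ∂Q ∂Q :=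
  integral_prod _ (integrable_of_nonneg_of_le_one ((measurable_disagreement hev).comp
    measurable_prodMk_right) (disagreement_nonneg ev · x) (disagreement_le_one ev · x))

lemma integral_integral_disagreement {ev : Ω → X → Bool} (hev : Measurable (Function.uncurry ev))
    (D : Measure X) [IsProbabilityMeasure D] (Q : Measure Ω) [IsProbabilityMeasure Q] :
    ∫ θ, ∫ x, disagreement ev θ x ∂D ∂(Q.prod Q)
      = ∫ x, ∫ h, ∫ h', (if ev h x ≠ ev h' x then (1 : ℝ) else 0) ∂Q ∂Q ∂D := by
  rw [integral_integral_swap (integrable_of_nonneg_of_le_one (measurable_disagreement hev)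
    (fun q ↦ disagreement_nonneg ev q.1 q.2) fun q ↦ disagreement_le_one ev q.1 q.2)]
  simp_rw [integral_prod_disagreement hev]

end Disagreement

theorem pac_bayes_disagreement_general
    {X : Type*} [MeasurableSpace X] {Ω : Type*} [MeasurableSpace Ω]
    (ev : Ω → X → Bool) (hev : Measurable (Function.uncurry ev))
    (DT : Measure X) [IsProbabilityMeasure DT]
    (pr : Measure Ω) [IsProbabilityMeasure pr]
    (mt : ℕ) (c : ℝ) (hc : 0 < c) (δ : ℝ) (hδ0 : 0 < δ) :
    ENNReal.ofReal (1 - δ) ≤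
      (Measure.pi fun _ : Fin mt => DT)
        {T | ∀ Q : Measure Ω, IsProbabilityMeasure Q →
          -- d_{D_T}(Q) ≤ c/(1-e^{-c}) [ d̂_T(Q) + (2 KL(Q‖π) + ln(1/δ)) / (m_t c) ]
          ENNReal.ofReal (∫ x, ∫ h, ∫ h',
              (if ev h x ≠ ev h' x then (1 : ℝ) else 0) ∂Q ∂Q ∂DT)
            ≤ ENNReal.ofReal (c / (1 - Real.exp (-c)))
                * (ENNReal.ofReal ((1 / (mt : ℝ)) * ∑ i : Fin mt, ∫ h, ∫ h',
                      (if ev h (T i) ≠ ev h' (T i) then (1 : ℝ) else 0) ∂Q ∂Q)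
                   + (2 * klDivergence Q pr + ENNReal.ofReal (Real.log (1 / δ)))
                       / ENNReal.ofReal ((mt : ℝ) * c))} := by
  rcases le_or_gt 1 δ with hδ1 | hδ1
  · simp [ENNReal.ofReal_of_nonpos (sub_nonpos.2 hδ1)]
  have hlog : 0 < log (1 / δ) := log_pos (one_lt_one_div hδ0 hδ1)
  have ht : 0 < 1 - exp (-c) := sub_pos.2 (exp_lt_one_iff.2 (neg_lt_zero.2 hc))
  refine (pac_bayes_catoni (measurable_disagreement hev) (disagreement_nonneg ev)
    (disagreement_le_one ev) (pr.prod pr) hc.le hδ0).trans (measure_mono fun T hT Q _ ↦ ?_)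
  simp_rw [← integral_integral_disagreement hev, ← integral_prod_disagreement hev,
    klDivergence_eq_klDiv]
  refine ofReal_le_of_mul_sub_mul_le hc ht hlog fun hK ↦ ?_
  have hprod : klDiv (Q.prod Q) (pr.prod pr) = 2 * klDiv Q pr := by rw [klDiv_prod, two_mul]
  simpa only [hprod] using hT (Q.prod Q) inferInstance (hprod ▸ hK)

theorem pac_bayes_disagreement
    {X : Type*} [MeasurableSpace X] {Ω : Type*} [MeasurableSpace Ω]
    (ev : Ω → X → Bool) (hev : Measurable (Function.uncurry ev))
    (DT : Measure X) [IsProbabilityMeasure DT]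
    (pr : Measure Ω) [IsProbabilityMeasure pr]
    (mt : ℕ) (c : ℝ) (hc : 0 < c) (δ : ℝ) (hδ0 : 0 < δ) (hδ1 : δ ≤ 1) :
    ENNReal.ofReal (1 - δ) ≤
      (Measure.pi fun _ : Fin mt => DT)
        {T | ∀ Q : Measure Ω, IsProbabilityMeasure Q →
          -- d_{D_T}(Q) ≤ c/(1-e^{-c}) [ d̂_T(Q) + (2 KL(Q‖π) + ln(1/δ)) / (m_t c) ]
          ENNReal.ofReal (∫ x, ∫ h, ∫ h',
              (if ev h x ≠ ev h' x then (1 : ℝ) else 0) ∂Q ∂Q ∂DT)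
            ≤ ENNReal.ofReal (c / (1 - Real.exp (-c)))
                * (ENNReal.ofReal ((1 / (mt : ℝ)) * ∑ i : Fin mt, ∫ h, ∫ h',
                      (if ev h (T i) ≠ ev h' (T i) then (1 : ℝ) else 0) ∂Q ∂Q)
                   + (2 * klDivergence Q pr + ENNReal.ofReal (Real.log (1 / δ)))
                       / ENNReal.ofReal ((mt : ℝ) * c))} :=
  pac_bayes_disagreement_general ev hev DT pr mt c hc δ hδ0
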